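/- With the setup of type D_n weights: let λ₁, λ₂ : {1,...,n} → ℤ≥0 be an interlacing pair (conditions (a)-(c) as in the definition: λ₁(i)+λ₂(i) ≤ 1 for all i; at most one of λ₁, λ₂ is nonzero on {n-1,n}; and between any two indices i < j (with (i,j) ≠ (n-1,n)) where λ_r equals 1, the other weight λ_p equals 1 at some intermediate index). Suppose (λ₁+λ₂)(h_{n-1}) + (λ₁+λ₂)(h_n) = 1. Then for all 1 ≤ i < j ≤ n-1, |λ₁(h_{β_{i,j}}) − λ₂(h_{β_{i,j}})| ≤ 1, where λ(h_{β_{i,j}}) = λ(h_{i,n-1}) + λ(h_{j,n-2}) + λ(h_n), with λ(h_{a,b}) = λ(h_a) + ... + λ(h_b). -/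

import Mathlib

/-!
Say `λ₁` carries the one on the fork `{n-1, n}`. The interlacing condition forces the ones of
`λ₁` and `λ₂` in `[a, n]` to alternate, the last of them being the fork one of `λ₁`. Hence
`λ₁(h_{a,n-2}) - λ₂(h_{a,n-2})` is `0` or `-1` for every `a ≤ n - 1`, and
`λ₁(h_{β_{i,j}}) - λ₂(h_{β_{i,j}})` is the sum of two such differences plus the fork one.
-/

/-- The value `λ(h_a) + ⋯ + λ(h_b)` of a weight on a sum of consecutive simple coroots. -/
def hIcc (lam : ℕ → ℤ) (a b : ℕ) : ℤ := ∑ s ∈ Finset.Icc a b, lam s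

/-- Pairing of a weight with the coroot of the type-A root `α_{i,j}` in type `D_n`
(`α_{i,n} = α_i + ⋯ + α_{n-2} + α_n`); zero if `i > j`. -/
def hA (n : ℕ) (lam : ℕ → ℤ) (i j : ℕ) : ℤ :=
  if j < i then 0 else if j = n then hIcc lam i (n - 2) + lam n else hIcc lam i j

/-- Pairing of a weight with the coroot of `β_{i,j}`:
`λ(h_{β_{i,j}}) = λ(h_{i,n-1}) + λ(h_{j,n-2}) + λ(h_n)`. -/
def hBeta (n : ℕ) (lam : ℕ → ℤ) (i j : ℕ) : ℤ :=
  hIcc lam i (n - 1) + hIcc lam j (n - 2) + lam n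

/-- An interlacing pair of type `D_n` weights (weights are `ℕ → ℤ`, with values on
indices `1,…,n`; nonnegativity and the conditions (a)–(c) are built in). -/
def Interlacing (n : ℕ) (l1 l2 : ℕ → ℤ) : Prop :=
  (∀ i, 1 ≤ i → i ≤ n → 0 ≤ l1 i ∧ 0 ≤ l2 i ∧ l1 i + l2 i ≤ 1) ∧
  (0 < l1 (n - 1) + l1 n → l2 (n - 1) + l2 n = 0) ∧
  (0 < l2 (n - 1) + l2 n → l1 (n - 1) + l1 n = 0) ∧
  (∀ i j, 1 ≤ i → i < j → j ≤ n → ¬(i = n - 1 ∧ j = n) →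
    (l1 i = 1 → l1 j = 1 → ∃ s, i < s ∧ s < j ∧ l2 s = 1) ∧
    (l2 i = 1 → l2 j = 1 → ∃ s, i < s ∧ s < j ∧ l1 s = 1))

open Finset

/-- For `0/1`-valued `f`, `g`: the first one of `f` or `g` in `[a, T]` is a one of `f`. -/
def HitsFirst (f g : ℕ → ℤ) (a T : ℕ) : Prop :=
  ∃ t, a ≤ t ∧ t ≤ T ∧ f t = 1 ∧ ∀ s, a ≤ s → s < t → g s = 0

section Alternation

variable {f g : ℕ → ℤ} {a T : ℕ}

lemma HitsFirst.step (hf : 0 ≤ f a) (hg : 0 ≤ g a) (hfg : f a + g a ≤ 1)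
    (halt : f a = 1 → ∀ t, a < t → t ≤ T → f t = 1 → ∃ s, a < s ∧ s < t ∧ g s = 1)
    (h : HitsFirst f g (a + 1) T) :
    f a = 0 ∧ (g a = 1 ∧ HitsFirst g f a T ∨ g a = 0 ∧ HitsFirst f g a T) := by
  obtain ⟨t, hat, htT, hft, hg0⟩ := h
  have hfa : f a = 0 := by
    by_contra hne
    obtain ⟨s, has, hst, hgs⟩ := halt (by omega) t (by omega) htT hft
    have := hg0 s has hst
    omega
  refine ⟨hfa, ?_⟩
  by_cases hga : g a = 1
  · exact .inl ⟨hga, a, le_rfl, by omega, hga, fun s h₁ h₂ => by omega⟩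
  · refine .inr ⟨by omega, t, by omega, htT, hft, fun s has hst => ?_⟩
    rcases has.eq_or_lt with rfl | has
    · omega
    · exact hg0 s has hst

lemma sum_Ico_sub_eq_zero_or_neg_one {lo hi : ℕ}
    (hbd : ∀ s, lo ≤ s → s < hi → 0 ≤ f s ∧ 0 ≤ g s ∧ f s + g s ≤ 1)
    (halt : ∀ i j, lo ≤ i → i < hi → i < j → j ≤ T →
      (f i = 1 → f j = 1 → ∃ s, i < s ∧ s < j ∧ g s = 1) ∧
      (g i = 1 → g j = 1 → ∃ s, i < s ∧ s < j ∧ f s = 1))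
    (hend : HitsFirst f g hi T) (hlo : lo ≤ a) (hhi : a ≤ hi) :
    (∑ s ∈ Ico a hi, (f s - g s) = 0 ∧ HitsFirst f g a T) ∨
      (∑ s ∈ Ico a hi, (f s - g s) = -1 ∧ HitsFirst g f a T) := by
  induction hhi using Nat.decreasingInduction with
  | self => exact .inl ⟨by simp, hend⟩
  | of_succ k hk ih =>
    obtain ⟨hf, hg, hfg⟩ := hbd k hlo hk
    have hsum := sum_eq_sum_Ico_succ_bot hk (fun s => f s - g s)
    rcases ih (by omega) with ⟨hS, hF⟩ | ⟨hS, hG⟩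
    · obtain ⟨hfk, ⟨hgk, hG⟩ | ⟨hgk, hF⟩⟩ :=
        hF.step hf hg hfg fun h₁ t h₂ h₃ h₄ => (halt k t hlo hk h₂ h₃).1 h₁ h₄
      · exact .inr ⟨by omega, hG⟩
      · exact .inl ⟨by omega, hF⟩
    · obtain ⟨hgk, ⟨hfk, hF⟩ | ⟨hfk, hG⟩⟩ :=
        hG.step hg hf (by omega) fun h₁ t h₂ h₃ h₄ => (halt k t hlo hk h₂ h₃).2 h₁ h₄
      · exact .inl ⟨by omega, hF⟩
      · exact .inr ⟨by omega, hG⟩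

end Alternation

lemma hIcc_eq_sum_Ico (lam : ℕ → ℤ) (a b : ℕ) : hIcc lam a b = ∑ s ∈ Ico a (b + 1), lam s := by
  rw [hIcc, Ico_add_one_right_eq_Icc]

lemma hBeta_sub_hBeta {n : ℕ} (l1 l2 : ℕ → ℤ) {i j : ℕ} (hij : i < j) (hj : j ≤ n - 1) :
    hBeta n l1 i j - hBeta n l2 i j =
      ∑ s ∈ Ico i (n - 1), (l1 s - l2 s) + ∑ s ∈ Ico j (n - 1), (l1 s - l2 s) +
        (l1 (n - 1) - l2 (n - 1)) + (l1 n - l2 n) := by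
  have hn2 : n - 2 + 1 = n - 1 := by omega
  simp only [hBeta, hIcc_eq_sum_Ico, hn2, sum_Ico_succ_top (show i ≤ n - 1 by omega),
    sum_sub_distrib]
  ring

lemma Interlacing.symm {n : ℕ} {l1 l2 : ℕ → ℤ} (h : Interlacing n l1 l2) :
    Interlacing n l2 l1 := by
  obtain ⟨hbd, h12, h21, halt⟩ := h
  refine ⟨fun i h₁ h₂ => ?_, h21, h12, fun i j hi hij hj hne => (halt i j hi hij hj hne).symm⟩
  obtain ⟨x, y, z⟩ := hbd i h₁ h₂
  exact ⟨y, x, by omega⟩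

lemma Interlacing.abs_hBeta_sub_le_one_of_fork {n : ℕ} {l1 l2 : ℕ → ℤ}
    (h : Interlacing n l1 l2) (hfork : l1 (n - 1) + l1 n = 1) (h2 : l2 (n - 1) = 0)
    (h2' : l2 n = 0) {i j : ℕ} (hi : 1 ≤ i) (hij : i < j) (hj : j ≤ n - 1) :
    |hBeta n l1 i j - hBeta n l2 i j| ≤ 1 := by
  obtain ⟨hbd, -, -, halt⟩ := h
  have hend : HitsFirst l1 l2 (n - 1) n := by
    have := hbd (n - 1) (by omega) (by omega)
    have := hbd n (by omega) le_rfl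
    by_cases h1 : l1 (n - 1) = 1
    · exact ⟨n - 1, le_rfl, by omega, h1, fun s h₁ h₂ => by omega⟩
    · refine ⟨n, by omega, le_rfl, by omega, fun s h₁ h₂ => ?_⟩
      rwa [show s = n - 1 by omega]
  have hsum : ∀ a, 1 ≤ a → a ≤ n - 1 →
      ∑ s ∈ Ico a (n - 1), (l1 s - l2 s) = 0 ∨ ∑ s ∈ Ico a (n - 1), (l1 s - l2 s) = -1 :=
    fun a ha₁ ha₂ =>
      (sum_Ico_sub_eq_zero_or_neg_one (fun s h₁ h₂ => hbd s h₁ (by omega))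
        (fun i j hi hin hij hj => halt i j hi hij hj (by omega)) hend ha₁ ha₂).imp
        And.left And.left
  rw [hBeta_sub_hBeta l1 l2 hij hj, abs_le]
  rcases hsum i hi (by omega) with hsi | hsi <;> rcases hsum j (by omega) hj with hsj | hsj <;>
    constructor <;> linarith

theorem stmt1_general (n : ℕ) (l1 l2 : ℕ → ℤ) (h : Interlacing n l1 l2)
    (hfork : (l1 (n - 1) + l2 (n - 1)) + (l1 n + l2 n) = 1) :
    ∀ i j, 1 ≤ i → i < j → j ≤ n - 1 → |hBeta n l1 i j - hBeta n l2 i j| ≤ 1 := by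
  intro i j hi hij hj
  have hbd₁ := h.1 (n - 1) (by omega) (by omega)
  have hbd₂ := h.1 n (by omega) (by omega)
  rcases (show (l1 (n - 1) + l1 n = 1 ∧ l2 (n - 1) = 0 ∧ l2 n = 0) ∨
      (l2 (n - 1) + l2 n = 1 ∧ l1 (n - 1) = 0 ∧ l1 n = 0) by omega) with
    ⟨h₁, h₂, h₃⟩ | ⟨h₁, h₂, h₃⟩
  · exact h.abs_hBeta_sub_le_one_of_fork h₁ h₂ h₃ hi hij hj
  · rw [abs_sub_comm]
    exact h.symm.abs_hBeta_sub_le_one_of_fork h₁ h₂ h₃ hi hij hj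

/-- If `(λ₁+λ₂)(h_{n-1}) + (λ₁+λ₂)(h_n) = 1` for an interlacing pair, then
`|λ₁(h_{β_{i,j}}) − λ₂(h_{β_{i,j}})| ≤ 1` for all `1 ≤ i < j ≤ n-1`. -/
theorem stmt1 (n : ℕ) (hn : 4 ≤ n) (l1 l2 : ℕ → ℤ) (h : Interlacing n l1 l2)
    (hfork : (l1 (n - 1) + l2 (n - 1)) + (l1 n + l2 n) = 1) :
    ∀ i j, 1 ≤ i → i < j → j ≤ n - 1 → |hBeta n l1 i j - hBeta n l2 i j| ≤ 1 :=
  stmt1_general n l1 l2 h hfork
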